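/- Suppose A : ℝ → M₂(ℂ) is a smooth (infinitely differentiable) map such that for every τ ∈ ℝ, A(τ) ∈ SU(1,1) and the trace of A(τ) is real and lies in the open interval (−2,2). Then there exist smooth maps M : ℝ → SU(1,1) and θ : ℝ → ℝ such that M(τ)⁻¹·A(τ)·M(τ) = R_{θ(τ)} for all τ ∈ ℝ, and moreover θ'(τ) = Itr(M(τ)⁻¹·A(τ)⁻¹·A'(τ)·M(τ)) for all τ, where A' is the entrywise derivative of A. -/

import Mathlib

set_option maxHeartbeats 3200000

noncomputable section
open scoped ENNReal
open Complex Matrix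

/-- ρ = √(1 − |α|²). -/
def rho (w : ℂ) : ℝ := Real.sqrt (1 - ‖w‖ ^ 2)

/-- The Gesztesy–Zinchenko transfer matrix P(α, λ; z). -/
def Pmat (α lam z : ℂ) : Matrix (Fin 2) (Fin 2) ℂ :=
  ((rho α : ℂ))⁻¹ • !![-((starRingEnd ℂ) α), lam⁻¹; lam, -α]

/-- The Gesztesy–Zinchenko transfer matrix Q(α, λ; z). -/
def Qmat (α lam z : ℂ) : Matrix (Fin 2) (Fin 2) ℂ :=
  ((rho α : ℂ))⁻¹ • !![-α, lam * z⁻¹; lam⁻¹ * z, -((starRingEnd ℂ) α)]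

/-- Y(n; z): the one-step transfer matrix. -/
def Ymat (a lam : ℤ → ℂ) (z : ℂ) (n : ℤ) : Matrix (Fin 2) (Fin 2) ℂ :=
  if Odd n then Pmat (a n) (lam n) z else Qmat (a n) (lam n) z

/-- Z(n, 0; z) = Y(n−1; z) ⋯ Y(0; z). -/
def Zmat (a lam : ℤ → ℂ) (z : ℂ) : ℕ → Matrix (Fin 2) (Fin 2) ℂ
  | 0 => 1
  | n + 1 => Ymat a lam z n * Zmat a lam z n

/-- Frobenius (Hilbert–Schmidt) norm of a 2×2 complex matrix. -/
def matNorm (M : Matrix (Fin 2) (Fin 2) ℂ) : ℝ :=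
  Real.sqrt (∑ i, ∑ j, ‖M i j‖ ^ 2)

/-- The group SU(1,1) of 2×2 complex matrices. -/
def SU11 : Set (Matrix (Fin 2) (Fin 2) ℂ) :=
  {M | M.det = 1 ∧ Mᴴ * !![1, 0; 0, -1] * M = !![1, 0; 0, -1]}

/-- The rotation matrix R_θ = diag(e^{iθ}, e^{−iθ}). -/
def Rtheta (θ : ℝ) : Matrix (Fin 2) (Fin 2) ℂ :=
  !![Complex.exp (θ * Complex.I), 0; 0, Complex.exp (-θ * Complex.I)]

/-- 𝕂: the diagonal subgroup of SU(1,1). -/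
def Kset : Set (Matrix (Fin 2) (Fin 2) ℂ) := {R | ∃ θ : ℝ, R = Rtheta θ}

/-- The iTrace of a 2×2 complex matrix. -/
def iTr (M : Matrix (Fin 2) (Fin 2) ℂ) : ℂ := (M 0 0 - M 1 1) / (2 * Complex.I)

/-- M_ξ, the standard SU(1,1) element moving 0 to ξ. -/
def Mxi (ξ : ℂ) : Matrix (Fin 2) (Fin 2) ℂ :=
  ((Real.sqrt (1 - ‖ξ‖ ^ 2) : ℂ))⁻¹ • !![1, ξ; (starRingEnd ℂ) ξ, 1]

lemma aux_su11_entries (M : Matrix (Fin 2) (Fin 2) ℂ) (h : M ∈ SU11) :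
    M 1 0 = (starRingEnd ℂ) (M 0 1) ∧ M 1 1 = (starRingEnd ℂ) (M 0 0) ∧
    M 0 0 * (starRingEnd ℂ) (M 0 0) - M 0 1 * (starRingEnd ℂ) (M 0 1) = 1 := by
  obtain ⟨hdet, hJ⟩ := h
  set a := M 0 0 with ha; set b := M 0 1 with hb; set c := M 1 0 with hc; set d := M 1 1 with hd
  rw [Matrix.eta_fin_two M, ← ha, ← hb, ← hc, ← hd] at hdet hJ
  rw [Matrix.det_fin_two_of] at hdet
  have h00 := congrFun (congrFun hJ 0) 0
  have h01 := congrFun (congrFun hJ 0) 1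
  simp [Matrix.mul_apply, Fin.sum_univ_two, Matrix.conjTranspose_apply] at h00 h01
  have ha0 : a ≠ 0 := by
    intro h
    rw [h] at h00
    simp only [map_zero, zero_mul, zero_add] at h00
    have := congrArg Complex.re h00
    simp [Complex.mul_re] at this
    nlinarith [this, sq_nonneg c.re, sq_nonneg c.im]
  have hda : d = (starRingEnd ℂ) a := by
    linear_combination (starRingEnd ℂ) a * hdet - d * h00 + c * h01
  have h01' : (starRingEnd ℂ) a * (b - (starRingEnd ℂ) c) = 0 := by
    rw [hda] at h01; linear_combination h01
  have hcb : c = (starRingEnd ℂ) b := by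
    rcases mul_eq_zero.1 h01' with h | h
    · exact absurd h (by simpa using ha0)
    · have hb' : b = (starRingEnd ℂ) c := by linear_combination h
      rw [hb', Complex.conj_conj]
  refine ⟨hcb, hda, ?_⟩
  rw [hcb, hda] at hdet
  linear_combination hdet

lemma aux_conj_mat (p x y a b bb ab d0 d1 : ℂ) (hp : p ≠ 0)
    (h00 : a + b*y - x*bb - x*(ab*y) = d0*(p^2))
    (h01 : a*x + b - x*(bb*x) - x*ab = 0)
    (h10 : -(y*a) - y*(b*y) + bb + ab*y = 0)
    (h11 : -(y*(a*x)) - y*b + bb*x + ab = d1*(p^2)) :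
    (p⁻¹ • !![1, -x; -y, 1]) * (!![a, b; bb, ab] * (p⁻¹ • !![1, x; y, 1])) = !![d0, 0; 0, d1] := by
  ext i j
  fin_cases i <;> fin_cases j <;>
    simp only [Matrix.mul_apply, Fin.sum_univ_two, Matrix.smul_apply, Fin.mk_zero, Fin.mk_one,
      Matrix.cons_val_zero, Matrix.cons_val_one, Matrix.head_cons, Matrix.head_fin_const,
      Matrix.cons_val', Matrix.cons_val_fin_one, Matrix.empty_val', smul_eq_mul, Matrix.of_apply] <;>
    field_simp
  · linear_combination h00
  · linear_combination h01
  · linear_combination h10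
  · linear_combination h11

lemma aux_right_inv (p x y : ℂ) (hp : p ≠ 0) (hxy : 1 - x*y = p^2) :
    (p⁻¹ • !![1, x; y, 1]) * (p⁻¹ • !![1, -x; -y, 1]) = 1 := by
  ext i j
  fin_cases i <;> fin_cases j <;>
    simp only [Matrix.mul_apply, Fin.sum_univ_two, Matrix.smul_apply, Fin.mk_zero, Fin.mk_one,
      Matrix.cons_val_zero, Matrix.cons_val_one, Matrix.head_cons, Matrix.head_fin_const,
      Matrix.cons_val', Matrix.cons_val_fin_one, Matrix.empty_val', smul_eq_mul, Matrix.of_apply,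
      Matrix.one_fin_two, Matrix.one_apply] <;>
    field_simp <;>
    first
      | linear_combination hxy
      | linear_combination p^2 * hxy
      | linear_combination -hxy
      | linear_combination -(p^2) * hxy
      | (rw [if_pos trivial]; linear_combination hxy)
      | (rw [if_neg (by decide)]; linear_combination)

lemma aux_su11_mem (p x y : ℂ) (hp : p ≠ 0) (hxy : 1 - x*y = p^2)
    (hcp : (starRingEnd ℂ) p = p) (hcx : (starRingEnd ℂ) x = y) (hcy : (starRingEnd ℂ) y = x) :
    (p⁻¹ • !![1, x; y, 1]) ∈ SU11 := by
  constructor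
  · rw [Matrix.det_smul, Matrix.det_fin_two_of]
    simp only [Fintype.card_fin, smul_eq_mul]
    field_simp
    linear_combination hxy
  · have hH : (p⁻¹ • !![(1:ℂ), x; y, 1])ᴴ = p⁻¹ • !![1, x; y, 1] := by
      rw [Matrix.conjTranspose_smul]
      congr 1
      · simp [hcp]
      · ext i j; fin_cases i <;> fin_cases j <;> simp [Matrix.conjTranspose_apply, hcx, hcy]
    rw [hH]
    ext i j
    fin_cases i <;> fin_cases j <;>
      simp only [Matrix.mul_apply, Fin.sum_univ_two, Matrix.smul_apply, Fin.mk_zero, Fin.mk_one,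
        Matrix.cons_val_zero, Matrix.cons_val_one, Matrix.head_cons, Matrix.head_fin_const,
        Matrix.cons_val', Matrix.cons_val_fin_one, Matrix.empty_val', smul_eq_mul,
        Matrix.of_apply] <;>
      field_simp <;>
      first
        | linear_combination hxy
        | linear_combination p^2 * hxy
        | linear_combination -hxy
        | linear_combination -(p^2) * hxy
        | linear_combination

lemma aux_itr_clean (a' ab' b' bb' b bb c s r e : ℂ)
    (hbb : b*bb = s^2 - r^2) (hr2 : r^2 = 1 - c^2) (he2 : e^2 = 1)
    (hC : a'*(c - s*I) + (c + s*I)*ab' - b'*bb - b*bb' = 0) :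
    ((s+e*r)^2 + b*bb) * ((c - s*I)*a' - (c + s*I)*ab' - b*bb' + bb*b')
      - 2*I*bb*(s+e*r) * ((c - s*I)*b' - b*ab')
      - 2*I*b*(s+e*r) * ((c + s*I)*bb' - bb*a')
      = -2*I*(s+e*r)*(a' + ab') := by
  linear_combination
    (((c - s*I)*a' - (c + s*I)*ab' + bb*b' - b*bb') + 2*I*(s+e*r)*(a'+ab')) * hbb
    + r^2*((c - s*I)*a' - (c + s*I)*ab' + bb*b' - b*bb') * he2
    - 2*I*(s+e*r)*(a'+ab') * hr2
    + 2*I*(s+e*r)*c * hC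
    + 2*(s+e*r)*s*((bb*b' - b*bb') + c*(a'-ab')) * Complex.I_sq

lemma aux_h00 (a ab b bb c s r e g p : ℂ)
    (ha : a = c + s*I) (hab : ab = c - s*I) (hbb : b*bb = s^2 - r^2)
    (he2 : e^2 = 1) (hg : g = s + e*r) (hrho : p^2*g = 2*e*r)
    (hg0 : g ≠ 0) (hp0 : p ≠ 0) :
    a + b*(-I*bb/g) - (I*b/g)*bb - (I*b/g)*(ab*(-I*bb/g)) = (c + e*r*I)*(p^2) := by
  have e00 : a*g^2 - 2*I*(b*bb)*g - ab*(b*bb) = (c + e*r*I) * (2*e*r*g) := by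
    subst ha hab hg
    linear_combination (-2*I*(s+e*r) - (c - s*I)) * hbb - r^2*(c + (s+2*e*r)*I) * he2
  field_simp
  linear_combination e00 - (c + e*r*I)*g * hrho + b*bb*ab * Complex.I_sq

lemma aux_h01 (a ab b bb c s r e g p : ℂ)
    (ha : a = c + s*I) (hab : ab = c - s*I) (hbb : b*bb = s^2 - r^2)
    (he2 : e^2 = 1) (hg : g = s + e*r) (hg0 : g ≠ 0) :
    a*(I*b/g) + b - (I*b/g)*(bb*(I*b/g)) - (I*b/g)*ab = 0 := by
  have e01 : (a - ab)*(I*b)*g + b*g^2 + bb*b^2 = 0 := by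
    subst ha hab hg
    linear_combination b * hbb + b*r^2 * he2 + (2*s*b*(e*r+s)) * Complex.I_sq
  field_simp
  linear_combination e01 - b^2*bb * Complex.I_sq

lemma aux_h10 (a ab b bb c s r e g p : ℂ)
    (ha : a = c + s*I) (hab : ab = c - s*I) (hbb : b*bb = s^2 - r^2)
    (he2 : e^2 = 1) (hg : g = s + e*r) (hg0 : g ≠ 0) :
    -((-I*bb/g)*a) - (-I*bb/g)*(b*(-I*bb/g)) + bb + ab*(-I*bb/g) = 0 := by
  have e10 : (ab - a)*(-I*bb)*g + bb*g^2 + b*bb^2 = 0 := by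
    subst ha hab hg
    linear_combination bb * hbb + bb*r^2 * he2 + (2*s*bb*(e*r+s)) * Complex.I_sq
  field_simp
  linear_combination e10 - bb^2*b * Complex.I_sq

lemma aux_h11 (a ab b bb c s r e g p : ℂ)
    (ha : a = c + s*I) (hab : ab = c - s*I) (hbb : b*bb = s^2 - r^2)
    (he2 : e^2 = 1) (hg : g = s + e*r) (hrho : p^2*g = 2*e*r)
    (hg0 : g ≠ 0) (hp0 : p ≠ 0) :
    -((-I*bb/g)*(a*(I*b/g))) - (-I*bb/g)*b + bb*(I*b/g) + ab = (c - e*r*I)*(p^2) := by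
  have e11 : ab*g^2 + 2*I*(b*bb)*g - a*(b*bb) = (c - e*r*I) * (2*e*r*g) := by
    subst ha hab hg
    linear_combination (2*I*(s+e*r) - (c + s*I)) * hbb - r^2*(c - (s+2*e*r)*I) * he2
  field_simp
  linear_combination e11 - (c - e*r*I)*g * hrho + a*b*bb * Complex.I_sq

lemma aux_itr_mat (p x y n00 n01 n10 n11 t : ℂ) (hp : p ≠ 0)
    (h : t * (2*I) * p^2 = (n00 + n01*y - x*n10 - x*(n11*y))
          - (-(y*(n00*x)) - y*n01 + n10*x + n11)) :
    t = iTr ((p⁻¹ • !![1, -x; -y, 1]) * (!![n00, n01; n10, n11] * (p⁻¹ • !![1, x; y, 1]))) := by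
  rw [iTr]
  have hI : (2*I : ℂ) ≠ 0 := by simp [Complex.I_ne_zero]
  simp only [Matrix.mul_apply, Fin.sum_univ_two, Matrix.smul_apply, Fin.mk_zero, Fin.mk_one,
    Matrix.cons_val_zero, Matrix.cons_val_one, Matrix.head_cons, Matrix.head_fin_const,
    Matrix.cons_val', Matrix.cons_val_fin_one, Matrix.empty_val', smul_eq_mul, Matrix.of_apply]
  rw [eq_div_iff hI]
  have hq : p * p⁻¹ = 1 := mul_inv_cancel₀ hp
  linear_combination (p⁻¹)^2 * h - t*(2*I)*(p*p⁻¹+1)*hq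

lemma aux_itr_full (p b bb a' ab' b' bb' c s r e t : ℂ)
    (hbb : b*bb = s^2 - r^2) (hr2 : r^2 = 1 - c^2) (he2 : e^2 = 1)
    (hC : a'*(c - s*I) + (c + s*I)*ab' - b'*bb - b*bb' = 0)
    (hrho : p^2*(s+e*r) = 2*e*r) (ht : t*(2*r) = -(e*(a'+ab')))
    (hg0 : s+e*r ≠ 0) (hp0 : p ≠ 0) :
    t = iTr ((p⁻¹ • !![1, -(I*b/(s+e*r)); -(-I*bb/(s+e*r)), 1]) *
        (!![(c - s*I)*a' - b*bb', (c - s*I)*b' - b*ab';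
            -(bb*a') + (c + s*I)*bb', -(bb*b') + (c + s*I)*ab'] *
          (p⁻¹ • !![1, I*b/(s+e*r); -I*bb/(s+e*r), 1]))) := by
  apply aux_itr_mat _ _ _ _ _ _ _ _ hp0
  have hclean := aux_itr_clean a' ab' b' bb' b bb c s r e hbb hr2 he2 hC
  set g : ℂ := s + e*r with hg_def
  have hq : g * g⁻¹ = 1 := mul_inv_cancel₀ hg0
  set n00 : ℂ := (c - s*I)*a' - b*bb' with hn00
  set n01 : ℂ := (c - s*I)*b' - b*ab' with hn01
  set n10 : ℂ := -(bb*a') + (c + s*I)*bb' with hn10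
  set n11 : ℂ := -(bb*b') + (c + s*I)*ab' with hn11
  simp only [div_eq_mul_inv, neg_mul]
  linear_combination
    (-(2*I*g*(g⁻¹)^2*(a'+ab'))) * he2
    + (2*I*e*g*(g⁻¹)^2) * ht
    + (t*2*I*g*(g⁻¹)^2) * hrho
    - (g⁻¹)^2 * hclean
    + (b*bb*(g⁻¹)^2*(n00-n11)) * Complex.I_sq
    + (-( g*g⁻¹+1)*(t*2*I*p^2) + (g*g⁻¹+1)*(n00-n11) - 2*I*(bb*n01 + b*n10)*g⁻¹) * hq

/-- A smooth family of elliptic SU(1,1) matrices can be smoothly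
conjugated to rotations, and the derivative of the rotation angle is given by the
iTrace formula θ'(τ) = Itr(M⁻¹·A⁻¹·A'·M). -/
theorem smooth_conjugation_to_rotations_and_angle_derivative
    (A : ℝ → Matrix (Fin 2) (Fin 2) ℂ)
    (hA_smooth : ∀ i j, ContDiff ℝ (⊤ : ℕ∞) fun τ => A τ i j)
    (hA_su : ∀ τ, A τ ∈ SU11)
    (hA_tr : ∀ τ, (A τ).trace.im = 0 ∧ (A τ).trace.re ∈ Set.Ioo (-2 : ℝ) 2) :
    ∃ (M : ℝ → Matrix (Fin 2) (Fin 2) ℂ) (θ : ℝ → ℝ),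
      (∀ i j, ContDiff ℝ (⊤ : ℕ∞) fun τ => M τ i j) ∧ ContDiff ℝ (⊤ : ℕ∞) θ ∧
      (∀ τ, M τ ∈ SU11) ∧
      (∀ τ, (M τ)⁻¹ * A τ * M τ = Rtheta (θ τ)) ∧
      (∀ τ, (Complex.ofReal (deriv θ τ)) =
        iTr ((M τ)⁻¹ * (A τ)⁻¹ *
          (Matrix.of fun i j => deriv (fun t => A t i j) τ) * M τ)) := by
  classical
  have hstr := fun τ => aux_su11_entries (A τ) (hA_su τ)
  set aa : ℝ → ℂ := fun τ => A τ 0 0 with haa_def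
  set b : ℝ → ℂ := fun τ => A τ 0 1 with hb_def
  set c : ℝ → ℝ := fun τ => (aa τ).re with hc_def
  set s : ℝ → ℝ := fun τ => (aa τ).im with hs_def
  have haC : ContDiff ℝ (⊤ : ℕ∞) aa := hA_smooth 0 0
  have hbC : ContDiff ℝ (⊤ : ℕ∞) b := hA_smooth 0 1
  have hcC : ContDiff ℝ (⊤ : ℕ∞) c := Complex.reCLM.contDiff.comp haC
  have hsC : ContDiff ℝ (⊤ : ℕ∞) s := Complex.imCLM.contDiff.comp haC
  have hnorm : ∀ τ, aa τ * (starRingEnd ℂ) (aa τ) - b τ * (starRingEnd ℂ) (b τ) = 1 :=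
    fun τ => (hstr τ).2.2
  -- trace bounds
  have hcI : ∀ τ, -1 < c τ ∧ c τ < 1 := by
    intro τ
    have hlo := (hA_tr τ).2.1
    have hhi := (hA_tr τ).2.2
    have htr : (A τ).trace = aa τ + (starRingEnd ℂ) (aa τ) := by
      rw [Matrix.trace_fin_two, (hstr τ).2.1]
    have : (A τ).trace.re = 2 * c τ := by
      rw [htr]; simp [Complex.add_re, hc_def]; ring
    constructor <;> nlinarith [hlo, hhi, this]
  -- norm relation, real form
  have hs2 : ∀ τ, s τ ^ 2 = 1 - c τ ^ 2 + Complex.normSq (b τ) := by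
    intro τ
    have h := hnorm τ
    rw [Complex.mul_conj, Complex.mul_conj] at h
    have h2 : Complex.normSq (aa τ) - Complex.normSq (b τ) = 1 := by
      exact_mod_cast congrArg Complex.re h
    have : Complex.normSq (aa τ) = c τ ^ 2 + s τ ^ 2 := by
      rw [Complex.normSq_apply]; ring
    nlinarith [h2, this]
  have hs0 : ∀ τ, s τ ≠ 0 := by
    intro τ h
    have h1 := hs2 τ
    have h2 := (hcI τ).1; have h3 := (hcI τ).2
    nlinarith [Complex.normSq_nonneg (b τ), h1, h]
  -- r
  set r : ℝ → ℝ := fun τ => Real.sqrt (1 - c τ ^ 2) with hr_def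
  have hrpos : ∀ τ, 0 < r τ := by
    intro τ
    apply Real.sqrt_pos.2
    nlinarith [(hcI τ).1, (hcI τ).2]
  have hr2 : ∀ τ, r τ ^ 2 = 1 - c τ ^ 2 := by
    intro τ
    apply Real.sq_sqrt
    nlinarith [(hcI τ).1, (hcI τ).2]
  have hrC : ContDiff ℝ (⊤ : ℕ∞) r := by
    rw [contDiff_iff_contDiffAt]
    intro τ
    exact (Real.contDiffAt_sqrt (by nlinarith [(hcI τ).1, (hcI τ).2] : 1 - c τ^2 ≠ 0)).comp τ
      ((contDiff_const.sub (hcC.pow 2)).contDiffAt)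
  -- sign
  set e : ℝ := if 0 < s 0 then (1:ℝ) else -1 with he_def
  have he2 : e ^ 2 = 1 := by
    rw [he_def]; split <;> norm_num
  have hes : ∀ τ, 0 < e * s τ := by
    have h0 : 0 < e * s 0 := by
      rw [he_def]; split
      · simpa using ‹0 < s 0›
      · rcases lt_or_gt_of_ne (hs0 0) with h | h
        · nlinarith
        · exact absurd h ‹¬ 0 < s 0›
    intro τ
    by_contra hle
    push_neg at hle
    have hlt : e * s τ < 0 := lt_of_le_of_ne hle (by
      intro h
      rcases mul_eq_zero.1 h with h' | h'
      · rw [he_def] at h'; revert h'; split <;> norm_num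
      · exact hs0 τ h')
    have hcont : ContinuousOn (fun t => e * s t) (Set.uIcc 0 τ) :=
      (continuous_const.mul hsC.continuous).continuousOn
    have : (0:ℝ) ∈ Set.uIcc (e * s 0) (e * s τ) := by
      rw [Set.mem_uIcc]; right; exact ⟨hlt.le, h0.le⟩
    obtain ⟨x, _, hx⟩ := intermediate_value_uIcc hcont this
    rcases mul_eq_zero.1 hx with h' | h'
    · rw [he_def] at h'; revert h'; split <;> norm_num
    · exact hs0 x h'
  -- g
  set g : ℝ → ℝ := fun τ => s τ + e * r τ with hg_def
  have hgC : ContDiff ℝ (⊤ : ℕ∞) g := hsC.add (contDiff_const.mul hrC)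
  have heg : ∀ τ, 0 < e * g τ := by
    intro τ
    have : e * g τ = e * s τ + e^2 * r τ := by rw [hg_def]; ring
    rw [this, he2]
    nlinarith [hes τ, hrpos τ]
  have hg0 : ∀ τ, g τ ≠ 0 := by
    intro τ h
    have := heg τ; rw [h, mul_zero] at this; exact lt_irrefl 0 this
  have hgC0 : ∀ τ, (g τ : ℂ) ≠ 0 := fun τ => Complex.ofReal_ne_zero.2 (hg0 τ)
  -- xi
  set ξ : ℝ → ℂ := fun τ => Complex.I * b τ / (g τ : ℂ) with hxi_def
  have hgCC : ContDiff ℝ (⊤ : ℕ∞) fun τ => (g τ : ℂ) := Complex.ofRealCLM.contDiff.comp hgC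
  have hxiC : ContDiff ℝ (⊤ : ℕ∞) ξ := by
    have h1 : ContDiff ℝ (⊤ : ℕ∞) fun τ => Complex.I * b τ * ((g τ : ℂ))⁻¹ :=
      (contDiff_const.mul hbC).mul (hgCC.inv hgC0)
    simpa only [div_eq_mul_inv, hxi_def] using h1
  have habs : ∀ τ, 1 - ‖ξ τ‖ ^ 2 = 2 * e * r τ / g τ := by
    intro τ
    rw [Complex.sq_norm, hxi_def]
    simp only [Complex.normSq_div, Complex.normSq_mul, Complex.normSq_I, one_mul,
      Complex.normSq_ofReal]
    have hb2 : Complex.normSq (b τ) = s τ^2 - r τ^2 := by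
      rw [hr2]; nlinarith [hs2 τ]
    rw [hb2]
    have h1 : g τ * g τ ≠ 0 := mul_ne_zero (hg0 τ) (hg0 τ)
    have h2 := hg0 τ
    field_simp
    simp only [hg_def]
    linear_combination (-(r τ^2)) * he2
  have hfrac : ∀ τ, 0 < 2 * e * r τ / g τ := by
    intro τ
    have hg2 : 0 < g τ ^ 2 := by
      rcases lt_or_gt_of_ne (hg0 τ) with h | h <;> nlinarith
    have heq : 2 * e * r τ / g τ = 2 * r τ * (e * g τ) / (g τ)^2 := by
      rw [div_eq_div_iff (hg0 τ) (ne_of_gt hg2)]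
      ring
    rw [heq]
    exact div_pos (by nlinarith [hrpos τ, heg τ]) hg2
  -- p
  set p : ℝ → ℝ := fun τ => rho (ξ τ) with hp_def
  have hpeq : ∀ τ, p τ = Real.sqrt (2 * e * r τ / g τ) := by
    intro τ; rw [hp_def]; simp only [rho]; rw [habs τ]
  have hppos : ∀ τ, 0 < p τ := fun τ => by rw [hpeq τ]; exact Real.sqrt_pos.2 (hfrac τ)
  have hp0 : ∀ τ, p τ ≠ 0 := fun τ => ne_of_gt (hppos τ)
  have hpC0 : ∀ τ, ((p τ : ℂ)) ≠ 0 := fun τ => Complex.ofReal_ne_zero.2 (hp0 τ)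
  have hp2 : ∀ τ, p τ ^ 2 = 2 * e * r τ / g τ := fun τ => by
    rw [hpeq τ]; exact Real.sq_sqrt (hfrac τ).le
  have hpC : ContDiff ℝ (⊤ : ℕ∞) p := by
    have h1 : ContDiff ℝ (⊤ : ℕ∞) fun τ => 2 * e * r τ / g τ := (contDiff_const.mul hrC).div hgC hg0
    rw [contDiff_iff_contDiffAt]
    intro τ
    exact (((Real.contDiffAt_sqrt (ne_of_gt (hfrac τ))).comp τ
      h1.contDiffAt)).congr_of_eventuallyEq (Filter.Eventually.of_forall fun t => hpeq t)
  -- M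
  set M : ℝ → Matrix (Fin 2) (Fin 2) ℂ := fun τ => Mxi (ξ τ) with hM_def
  have hMform : ∀ τ, M τ = ((p τ : ℂ))⁻¹ • !![1, ξ τ; (starRingEnd ℂ) (ξ τ), 1] :=
    fun τ => rfl
  have hxy : ∀ τ, 1 - ξ τ * (starRingEnd ℂ) (ξ τ) = ((p τ : ℂ))^2 := by
    intro τ
    have h1 : p τ^2 = 1 - ‖ξ τ‖^2 := by rw [hp2 τ, habs τ]
    calc 1 - ξ τ * (starRingEnd ℂ) (ξ τ)
        = ((1 - ‖ξ τ‖^2 : ℝ) : ℂ) := by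
          rw [Complex.mul_conj, ← Complex.sq_norm]; push_cast; ring
      _ = ((p τ : ℂ))^2 := by rw [← h1]; push_cast; ring
  -- θ
  set θ : ℝ → ℝ := fun τ => e * Real.arccos (c τ) with hθ_def
  have hθC : ContDiff ℝ (⊤ : ℕ∞) θ := by
    rw [contDiff_iff_contDiffAt]
    intro τ
    exact contDiffAt_const.mul ((Real.contDiffAt_arccos (ne_of_gt (hcI τ).1)
      (ne_of_lt (hcI τ).2)).comp τ hcC.contDiffAt)
  have he1 : e = 1 ∨ e = -1 := by
    rw [he_def]; split
    · exact Or.inl rfl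
    · exact Or.inr rfl
  have hcosθ : ∀ τ, Real.cos (θ τ) = c τ := by
    intro τ
    have hb1 := (hcI τ).1.le
    have hb2 := (hcI τ).2.le
    rcases he1 with h | h <;> rw [hθ_def] <;> simp only [h] <;>
      [skip; rw [neg_one_mul, Real.cos_neg]] <;>
      simp [Real.cos_arccos hb1 hb2]
  have hsinθ : ∀ τ, Real.sin (θ τ) = e * r τ := by
    intro τ
    rcases he1 with h | h <;> rw [hθ_def] <;> simp only [h] <;>
      [skip; rw [neg_one_mul, Real.sin_neg]] <;>
      simp [Real.sin_arccos, hr_def]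
  have hRform : ∀ τ, Rtheta (θ τ) =
      !![(c τ : ℂ) + ((e:ℝ):ℂ) * ((r τ:ℝ):ℂ) * Complex.I, 0;
         0, (c τ : ℂ) - ((e:ℝ):ℂ) * ((r τ:ℝ):ℂ) * Complex.I] := by
    intro τ
    have h1 : Complex.exp ((θ τ : ℝ) * Complex.I)
        = (c τ : ℂ) + ((e:ℝ):ℂ) * ((r τ:ℝ):ℂ) * Complex.I := by
      rw [Complex.exp_mul_I, ← Complex.ofReal_cos, ← Complex.ofReal_sin, hcosθ, hsinθ]
      push_cast; ring
    have h2 : Complex.exp (-(θ τ : ℝ) * Complex.I)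
        = (c τ : ℂ) - ((e:ℝ):ℂ) * ((r τ:ℝ):ℂ) * Complex.I := by
      rw [← Complex.ofReal_neg, Complex.exp_mul_I, ← Complex.ofReal_cos, ← Complex.ofReal_sin,
        Real.cos_neg, Real.sin_neg, hcosθ, hsinθ]
      push_cast; ring
    rw [Rtheta, h1, ← h2]
  -- hoisted facts
  have hMinv : ∀ τ, (M τ)⁻¹ = ((p τ:ℂ))⁻¹ • !![1, -(ξ τ); -((starRingEnd ℂ) (ξ τ)), 1] := by
    intro τ
    refine Matrix.inv_eq_right_inv ?_
    rw [hMform τ]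
    exact aux_right_inv _ _ _ (hpC0 τ) (hxy τ)
  have hAeta : ∀ τ, A τ = !![aa τ, b τ; (starRingEnd ℂ) (b τ), (starRingEnd ℂ) (aa τ)] := by
    intro τ
    rw [Matrix.eta_fin_two (A τ), (hstr τ).1, (hstr τ).2.1]
  have hacx : ∀ τ, aa τ = (c τ : ℂ) + (s τ : ℂ) * Complex.I :=
    fun τ => (Complex.re_add_im (aa τ)).symm
  have habx : ∀ τ, (starRingEnd ℂ) (aa τ) = (c τ : ℂ) - (s τ : ℂ) * Complex.I := by
    intro τ
    rw [hacx τ, map_add, _root_.map_mul, Complex.conj_I, Complex.conj_ofReal, Complex.conj_ofReal]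
    ring
  have hbbx : ∀ τ, b τ * (starRingEnd ℂ) (b τ) = (s τ:ℂ)^2 - (r τ:ℂ)^2 := by
    intro τ
    rw [Complex.mul_conj]
    have h1 : Complex.normSq (b τ) = s τ^2 - r τ^2 := by rw [hr2 τ]; nlinarith [hs2 τ]
    rw [h1]; push_cast; ring
  have he2x : ((e:ℝ):ℂ)^2 = 1 := by exact_mod_cast congrArg (fun x : ℝ => (x:ℂ)) he2
  have hr2x : ∀ τ, ((r τ:ℝ):ℂ)^2 = 1 - ((c τ:ℝ):ℂ)^2 := by
    intro τ
    exact_mod_cast congrArg (fun x : ℝ => (x:ℂ)) (hr2 τ)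
  have hgx : ∀ τ, ((g τ : ℝ):ℂ) = (s τ:ℂ) + ((e:ℝ):ℂ) * (r τ:ℂ) := by
    intro τ; rw [hg_def]; push_cast; ring
  have hrhox : ∀ τ, ((p τ:ℝ):ℂ)^2 * ((g τ:ℝ):ℂ) = 2 * ((e:ℝ):ℂ) * (r τ:ℂ) := by
    intro τ
    have hreal : p τ^2 * g τ = 2 * e * r τ := by
      rw [hp2 τ, div_mul_cancel₀ _ (hg0 τ)]
    exact_mod_cast congrArg (fun x : ℝ => (x:ℂ)) hreal
  have hconjxi : ∀ τ, (starRingEnd ℂ) (ξ τ) = -Complex.I * (starRingEnd ℂ) (b τ) / ((g τ:ℝ):ℂ) := by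
    intro τ
    rw [hxi_def]
    rw [map_div₀, _root_.map_mul, Complex.conj_I, Complex.conj_ofReal]
  have hxix : ∀ τ, ξ τ = Complex.I * b τ / ((g τ:ℝ):ℂ) := fun τ => rfl
  refine ⟨M, θ, ?_, hθC, ?_, ?_, ?_⟩
  · -- smoothness of M entries
    intro i j
    have hpinvC : ContDiff ℝ (⊤ : ℕ∞) fun τ => ((p τ : ℂ))⁻¹ :=
      (Complex.ofRealCLM.contDiff.comp hpC).inv hpC0
    have hconjC : ContDiff ℝ (⊤ : ℕ∞) fun τ => (starRingEnd ℂ) (ξ τ) := by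
      have h1 : ContDiff ℝ (⊤ : ℕ∞) fun z : ℂ => (starRingEnd ℂ) z :=
        Complex.conjCLE.toContinuousLinearMap.contDiff
      exact h1.comp hxiC
    fin_cases i <;> fin_cases j <;>
      simp only [hMform, Matrix.smul_apply, Fin.mk_zero, Fin.mk_one, Matrix.cons_val_zero,
        Matrix.cons_val_one, Matrix.head_cons, Matrix.head_fin_const, Matrix.cons_val',
        Matrix.cons_val_fin_one, Matrix.empty_val', Matrix.of_apply, smul_eq_mul] <;>
      first
        | exact hpinvC.mul contDiff_const
        | exact hpinvC.mul hxiC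
        | exact hpinvC.mul hconjC
  · -- SU11 membership
    intro τ
    have h1 := aux_su11_mem ((p τ:ℂ)) (ξ τ) ((starRingEnd ℂ) (ξ τ)) (hpC0 τ) (hxy τ)
      (Complex.conj_ofReal _) rfl (Complex.conj_conj _)
    rw [hMform τ]
    exact h1
  · -- conjugation to rotation
    intro τ
    rw [hMinv τ, hAeta τ, hMform τ, hRform τ, Matrix.mul_assoc, hconjxi τ, hxix τ]
    exact aux_conj_mat _ _ _ _ _ _ _ _ _ (hpC0 τ)
      (aux_h00 _ _ _ _ _ _ _ _ _ _ (hacx τ) (habx τ) (hbbx τ) he2x (hgx τ) (hrhox τ)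
        (hgC0 τ) (hpC0 τ))
      (aux_h01 _ _ _ _ _ _ _ _ _ ((p τ:ℝ):ℂ) (hacx τ) (habx τ) (hbbx τ) he2x (hgx τ) (hgC0 τ))
      (aux_h10 _ _ _ _ _ _ _ _ _ ((p τ:ℝ):ℂ) (hacx τ) (habx τ) (hbbx τ) he2x (hgx τ) (hgC0 τ))
      (aux_h11 _ _ _ _ _ _ _ _ _ _ (hacx τ) (habx τ) (hbbx τ) he2x (hgx τ) (hrhox τ)
        (hgC0 τ) (hpC0 τ))
  · -- derivative identity
    intro τ
    set a' : ℂ := deriv aa τ with ha'_def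
    set b' : ℂ := deriv b τ with hb'_def
    have hda : HasDerivAt aa a' τ := ((haC.differentiable (by simp)) τ).hasDerivAt
    have hdb : HasDerivAt b b' τ := ((hbC.differentiable (by simp)) τ).hasDerivAt
    have hdas : HasDerivAt (fun t => (starRingEnd ℂ) (aa t)) ((starRingEnd ℂ) a') τ := by
      simpa only [RCLike.star_def] using hda.star
    have hdbs : HasDerivAt (fun t => (starRingEnd ℂ) (b t)) ((starRingEnd ℂ) b') τ := by
      simpa only [RCLike.star_def] using hdb.star
    have hC0 : HasDerivAt
        (fun t => aa t * (starRingEnd ℂ) (aa t) - b t * (starRingEnd ℂ) (b t)) 0 τ :=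
      (hasDerivAt_const τ (1:ℂ)).congr_of_eventuallyEq
        (Filter.Eventually.of_forall fun t => hnorm t)
    have hC1 : HasDerivAt
        (fun t => aa t * (starRingEnd ℂ) (aa t) - b t * (starRingEnd ℂ) (b t))
        (a' * (starRingEnd ℂ) (aa τ) + aa τ * (starRingEnd ℂ) a'
          - (b' * (starRingEnd ℂ) (b τ) + b τ * (starRingEnd ℂ) b')) τ :=
      (hda.mul hdas).sub (hdb.mul hdbs)
    have hCeq : a' * (starRingEnd ℂ) (aa τ) + aa τ * (starRingEnd ℂ) a'
        - (b' * (starRingEnd ℂ) (b τ) + b τ * (starRingEnd ℂ) b') = 0 := hC1.unique hC0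
    have hCx : a' * ((c τ:ℂ) - (s τ:ℂ)*Complex.I) + ((c τ:ℂ) + (s τ:ℂ)*Complex.I) * (starRingEnd ℂ) a'
        - b' * (starRingEnd ℂ) (b τ) - b τ * (starRingEnd ℂ) b' = 0 := by
      rw [← habx τ, ← hacx τ]
      linear_combination hCeq
    have hdc : HasDerivAt c a'.re τ := by
      have h1 := (Complex.reCLM.hasFDerivAt.comp τ hda.hasFDerivAt).hasDerivAt
      exact h1.congr_deriv (by simp)
    have hdθ : HasDerivAt θ (e * (-(1 / Real.sqrt (1 - c τ^2)) * a'.re)) τ :=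
      ((Real.hasDerivAt_arccos (ne_of_gt (hcI τ).1) (ne_of_lt (hcI τ).2)).comp τ hdc).const_mul e
    have hθ' : deriv θ τ = e * (-(1 / r τ) * a'.re) := hdθ.deriv
    have htval : (Complex.ofReal (deriv θ τ)) * (2 * (r τ:ℂ))
        = -(((e:ℝ):ℂ) * (a' + (starRingEnd ℂ) a')) := by
      rw [hθ', Complex.add_conj]
      have hrne : (r τ:ℝ) ≠ 0 := ne_of_gt (hrpos τ)
      have hrne' : ((r τ:ℝ):ℂ) ≠ 0 := Complex.ofReal_ne_zero.2 hrne
      push_cast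
      field_simp
    have hAinv : (A τ)⁻¹ = !![(starRingEnd ℂ) (aa τ), -(b τ); -((starRingEnd ℂ) (b τ)), aa τ] := by
      refine Matrix.inv_eq_right_inv ?_
      rw [hAeta τ]
      ext i j
      fin_cases i <;> fin_cases j <;>
        simp [Matrix.mul_apply, Fin.sum_univ_two, Matrix.one_apply]
      all_goals first
        | linear_combination hnorm τ
        | ring
    have hA'm : (Matrix.of fun i j => deriv (fun t => A t i j) τ)
        = !![a', b'; (starRingEnd ℂ) b', (starRingEnd ℂ) a'] := by
      ext i j
      fin_cases i <;> fin_cases j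
      · rfl
      · rfl
      · have hfun : (fun t => A t 1 0) = fun t => (starRingEnd ℂ) (b t) :=
          funext fun t => (hstr t).1
        show deriv (fun t => A t 1 0) τ = (starRingEnd ℂ) b'
        rw [hfun]
        exact hdbs.deriv
      · have hfun : (fun t => A t 1 1) = fun t => (starRingEnd ℂ) (aa t) :=
          funext fun t => (hstr t).2.1
        show deriv (fun t => A t 1 1) τ = (starRingEnd ℂ) a'
        rw [hfun]
        exact hdas.deriv
    have hNprod : !![(starRingEnd ℂ) (aa τ), -(b τ); -((starRingEnd ℂ) (b τ)), aa τ]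
          * !![a', b'; (starRingEnd ℂ) b', (starRingEnd ℂ) a']
        = !![(starRingEnd ℂ) (aa τ)*a' - b τ*(starRingEnd ℂ) b',
             (starRingEnd ℂ) (aa τ)*b' - b τ*(starRingEnd ℂ) a';
             -((starRingEnd ℂ) (b τ)*a') + aa τ*(starRingEnd ℂ) b',
             -((starRingEnd ℂ) (b τ)*b') + aa τ*(starRingEnd ℂ) a'] := by
      ext i j
      fin_cases i <;> fin_cases j <;>
        simp only [Matrix.mul_apply, Fin.sum_univ_two, Fin.mk_zero, Fin.mk_one,
          Matrix.cons_val_zero, Matrix.cons_val_one, Matrix.head_cons, Matrix.head_fin_const,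
          Matrix.cons_val', Matrix.cons_val_fin_one, Matrix.empty_val', Matrix.of_apply] <;>
        ring
    rw [hAinv, hA'm, hMinv τ, hMform τ, Matrix.mul_assoc, Matrix.mul_assoc,
      ← Matrix.mul_assoc (!![(starRingEnd ℂ) (aa τ), -(b τ); -((starRingEnd ℂ) (b τ)), aa τ])
        (!![a', b'; (starRingEnd ℂ) b', (starRingEnd ℂ) a'])
        ((((p τ:ℝ):ℂ))⁻¹ • !![1, ξ τ; (starRingEnd ℂ) (ξ τ), 1]),
      hNprod, hconjxi τ, hxix τ, habx τ, hacx τ, hgx τ]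
    have hgx0 : ((s τ:ℝ):ℂ) + ((e:ℝ):ℂ) * ((r τ:ℝ):ℂ) ≠ 0 := by
      rw [← hgx τ]; exact hgC0 τ
    have hrho' : ((p τ:ℝ):ℂ)^2 * (((s τ:ℝ):ℂ) + ((e:ℝ):ℂ) * ((r τ:ℝ):ℂ))
        = 2 * ((e:ℝ):ℂ) * ((r τ:ℝ):ℂ) := by
      rw [← hgx τ]; exact hrhox τ
    exact aux_itr_full ((p τ:ℝ):ℂ) (b τ) ((starRingEnd ℂ) (b τ)) a' ((starRingEnd ℂ) a')
      b' ((starRingEnd ℂ) b') ((c τ:ℝ):ℂ) ((s τ:ℝ):ℂ) ((r τ:ℝ):ℂ) ((e:ℝ):ℂ)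
      ((deriv θ τ : ℝ):ℂ) (hbbx τ) (hr2x τ) he2x hCx hrho' htval hgx0 (hpC0 τ)
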